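/- arXiv:math/0112295 — 9 statements merged into one kernel-verified Lean document; each statement's English description precedes it below -/
import Mathlib

section
/- For every integrable complex structure J on g, the derived subalgebra [g,g] = span(E₅,E₆) is J-invariant, i.e. J([g,g]) = [g,g]. -/
open scoped ComplexOrder

noncomputable section

/-- The underlying real vector space of the Lie algebra `g` (coordinates w.r.t. `E₁,…,E₆`). -/
abbrev GV : Type := Fin 6 → ℝ

/-- The basis vectors `E₁,…,E₆` (indexed by `0,…,5`). -/
def E (i : Fin 6) : GV := Pi.single i 1

/-- The Lie bracket of `g`: the only nonzero brackets of basis vectors are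
`[E₁,E₃] = -E₅`, `[E₂,E₄] = E₅`, `[E₁,E₄] = -E₆`, `[E₂,E₃] = -E₆`. -/
def br (X Y : GV) : GV :=
  ![0, 0, 0, 0,
    -(X 0 * Y 2 - X 2 * Y 0) + (X 1 * Y 3 - X 3 * Y 1),
    -(X 0 * Y 3 - X 3 * Y 0) - (X 1 * Y 2 - X 2 * Y 1)]

/-- `J` is a complex structure: `J ∘ J = -id`. -/
def IsCpxStr (J : Module.End ℝ GV) : Prop := ∀ x, J (J x) = -x

/-- Integrability (Newlander–Nirenberg) condition. -/
def Integrable (J : Module.End ℝ GV) : Prop :=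
  ∀ X Y, br (J X) (J Y) = br X Y + J (br (J X) Y) + J (br X (J Y))

/-- `J` induces the standard orientation of `g`. -/
def PosOrient (J : Module.End ℝ GV) : Prop :=
  ∃ v₁ v₂ v₃ : GV,
    0 < (Matrix.of fun i j => ![v₁, J v₁, v₂, J v₂, v₃, J v₃] i j).det

/-- `C⁺(g)`: integrable complex structures inducing the standard orientation. -/
def Cplus : Set (Module.End ℝ GV) := {J | IsCpxStr J ∧ Integrable J ∧ PosOrient J}

/-- The inner product making `E₁,…,E₆` orthonormal. -/
def inner6 (x y : GV) : ℝ := ∑ i, x i * y i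

def IsOrthog (J : Module.End ℝ GV) : Prop := ∀ x y, inner6 (J x) (J y) = inner6 x y

/-- `C⁺(g,g)`: orthogonal members of `C⁺(g)`. -/
def Cgg : Set (Module.End ℝ GV) := {J | J ∈ Cplus ∧ IsOrthog J}

lemma le46 : (4:ℕ) ≤ 6 := by norm_num

/-- Determinant of `(w̄₁, Ĵw̄₁, w̄₂, Ĵw̄₂)` w.r.t. the basis `(Ē₁,…,Ē₄)` of `g/[g,g]`
(the coordinates of the class of `v` are the first four coordinates of `v`). -/
def hatDet (J : Module.End ℝ GV) (w₁ w₂ : GV) : ℝ :=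
  (Matrix.of fun (i : Fin 4) (j : Fin 4) =>
    ![w₁, J w₁, w₂, J w₂] i (Fin.castLE le46 j)).det

/-- `C₊`: members of `C⁺(g)` whose induced structure on `g/[g,g]` is positively oriented. -/
def CplusP : Set (Module.End ℝ GV) :=
  {J | J ∈ Cplus ∧ ∃ w₁ w₂ : GV, 0 < hatDet J w₁ w₂}

/-- `C₋`: members of `C⁺(g)` whose induced structure on `g/[g,g]` is negatively oriented. -/
def CplusM : Set (Module.End ℝ GV) :=
  {J | J ∈ Cplus ∧ ∃ w₁ w₂ : GV, hatDet J w₁ w₂ < 0}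

/-- `ℂ ⊗ g*`, identified with coordinate vectors with respect to the dual basis `e¹,…,e⁶`. -/
abbrev MC : Type := Fin 6 → ℂ

/-- Evaluation of a complexified 1-form on a vector of `g`. -/
def ev (α : MC) (v : GV) : ℂ := ∑ i, α i * v i

/-- The dual basis `e¹,…,e⁶` inside `ℂ ⊗ g*`. -/
def eC (i : Fin 6) : MC := Pi.single i 1

def w1 : MC := eC 0 + Complex.I • eC 1
def w2 : MC := eC 2 + Complex.I • eC 3
def w3 : MC := eC 4 + Complex.I • eC 5
/-- `ω̄¹` -/
def w1b : MC := eC 0 - Complex.I • eC 1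
/-- `ω̄²` -/
def w2b : MC := eC 2 - Complex.I • eC 3
/-- `ω̄³` -/
def w3b : MC := eC 4 - Complex.I • eC 5

/-- The space of `(1,0)`-forms of `J`, a complex subspace of `ℂ ⊗ g*`. -/
def holSub (J : Module.End ℝ GV) : Submodule ℂ MC where
  carrier := {α | ∀ v : GV, ev α (J v) = Complex.I * ev α v}
  add_mem' := by
    intro a b ha hb v
    simp only [ev, Pi.add_apply, add_mul, Finset.sum_add_distrib] at *
    rw [ha v, hb v]; ring
  zero_mem' := by intro v; simp [ev]
  smul_mem' := by
    intro c α hα v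
    simp only [ev, Pi.smul_apply, smul_eq_mul, mul_assoc, ← Finset.mul_sum] at *
    rw [hα v]; ring
/-- `(α₁, α₂, α₃)` is a basis of the space of `(1,0)`-forms of `J`. -/
def IsHolBasis (J : Module.End ℝ GV) (α₁ α₂ α₃ : MC) : Prop :=
  LinearIndependent ℂ ![α₁, α₂, α₃] ∧ Submodule.span ℂ {α₁, α₂, α₃} = holSub J

/-- Inclusion into the exterior algebra of `ℂ ⊗ g*`; wedge products are multiplications there. -/
def ι : MC →ₗ[ℂ] ExteriorAlgebra ℂ MC := ExteriorAlgebra.ι ℂ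

/-- The standard bi-invariant complex structure `J₀`. -/
def J0 : Module.End ℝ GV :=
  Matrix.mulVecLin !![0,-1,0,0,0,0; 1,0,0,0,0,0; 0,0,0,-1,0,0;
                      0,0,1,0,0,0; 0,0,0,0,0,-1; 0,0,0,0,1,0]

/-- The vector space underlying `V = span(E₁,E₂,E₃,E₄)`. -/
abbrev W4 : Type := Fin 4 → ℝ

/-- Inclusion `V = span(E₁,…,E₄) ↪ g`. -/
def incl (w : W4) : GV := fun i => if h : (i : ℕ) < 4 then w ⟨i, h⟩ else 0

def det4W (v : Fin 4 → W4) : ℝ := (Matrix.of fun i j => v i j).det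

/-- The topology on the space of `ℝ`-linear endomorphisms of `g`
(as a subspace of the space of all maps `g → g`). -/
instance : TopologicalSpace (Module.End ℝ GV) :=
  TopologicalSpace.induced (fun f => (f : GV → GV)) inferInstance

/-- The span of `E₁,E₂,E₃,E₄`. -/
def V4span : Submodule ℝ GV := Submodule.span ℝ {E 0, E 1, E 2, E 3}

/-! The centre of `g` equals `[g,g] = span(E₅,E₆)`, and `ad X` maps into it. Take `Z` central with
`JZ` not central, and `Y` with `u = [JZ,Y] ≠ 0`. Integrability with `[Z,·] = 0` gives
`Ju = [JZ,JY]`, so `u` and `Ju` both lie in `[g,g]`. As `J` has no real eigenvalues they are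
independent, hence span the plane `[g,g]`, which is therefore `J`-invariant. Otherwise `J` maps the
centre into itself directly. -/

theorem finrank_span_pair {K V : Type*} [Field K] [AddCommGroup V] [Module K V] {u v : V}
    (h : LinearIndependent K ![u, v]) : Module.finrank K (Submodule.span K {u, v}) = 2 := by
  rw [← Matrix.range_cons_cons_empty u v ![], finrank_span_eq_card h, Fintype.card_fin]

section ComplexStructure

variable {V : Type*} [AddCommGroup V] [Module ℝ V] {J : Module.End ℝ V}

theorem linearIndependent_pair_of_sq_eq_neg (hJ : ∀ x, J (J x) = -x) {u : V} (hu : u ≠ 0) :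
    LinearIndependent ℝ ![u, J u] := by
  rw [LinearIndependent.pair_iff]
  intro s t hst
  have hJst : s • J u - t • u = 0 := by
    simpa [hJ, sub_eq_add_neg] using congrArg J hst
  have : (s * s + t * t) • u = 0 := by
    calc (s * s + t * t) • u = s • (s • u + t • J u) - t • (s • J u - t • u) := by
          module
      _ = 0 := by rw [hst, hJst, smul_zero, smul_zero, sub_zero]
  have hsum : s * s + t * t = 0 := (smul_eq_zero.mp this).resolve_right hu
  constructor <;> nlinarith [mul_self_nonneg s, mul_self_nonneg t]

theorem map_span_pair_apply_le (hJ : ∀ x, J (J x) = -x) (u : V) :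
    (Submodule.span ℝ {u, J u}).map J ≤ Submodule.span ℝ {u, J u} := by
  rw [Submodule.map_span_le]
  rintro x (rfl | rfl)
  · exact Submodule.subset_span (by simp)
  · rw [hJ]
    exact Submodule.neg_mem _ (Submodule.subset_span (by simp))

theorem map_eq_self_of_map_le (hJ : ∀ x, J (J x) = -x) {S : Submodule ℝ V} (h : S.map J ≤ S) :
    S.map J = S := by
  refine le_antisymm h fun x hx => ⟨-J x, S.neg_mem (h ⟨x, hx, rfl⟩), ?_⟩
  rw [map_neg, hJ, neg_neg]

theorem map_eq_self_of_finrank_eq_two (hJ : ∀ x, J (J x) = -x) {S : Submodule ℝ V}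
    (hS : Module.finrank ℝ S = 2) {u : V} (hu : u ∈ S) (hu0 : u ≠ 0) (hJu : J u ∈ S) :
    S.map J = S := by
  have : FiniteDimensional ℝ S := Module.finite_of_finrank_eq_succ hS
  have hspan : Submodule.span ℝ {u, J u} = S := by
    refine Submodule.eq_of_le_of_finrank_eq ?_ ?_
    · rw [Submodule.span_le]
      rintro x (rfl | rfl) <;> assumption
    · rw [hS, finrank_span_pair (linearIndependent_pair_of_sq_eq_neg hJ hu0)]
  rw [← hspan]
  exact map_eq_self_of_map_le hJ (map_span_pair_apply_le hJ u)

end ComplexStructure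

theorem mem_span_E45_iff {x : GV} :
    x ∈ Submodule.span ℝ {E 4, E 5} ↔ x 0 = 0 ∧ x 1 = 0 ∧ x 2 = 0 ∧ x 3 = 0 := by
  rw [Submodule.mem_span_pair]
  constructor
  · rintro ⟨a, b, rfl⟩
    simp [E]
  · rintro ⟨h0, h1, h2, h3⟩
    refine ⟨x 4, x 5, funext fun i => ?_⟩
    fin_cases i <;> simp [E, *]

theorem finrank_span_E45 : Module.finrank ℝ (Submodule.span ℝ {E 4, E 5}) = 2 := by
  refine finrank_span_pair (LinearIndependent.pair_iff.mpr fun s t h => ?_)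
  have h4 := congrFun h 4
  have h5 := congrFun h 5
  simp [E] at h4 h5
  exact ⟨h4, h5⟩

theorem br_mem_span_E45 (X Y : GV) : br X Y ∈ Submodule.span ℝ {E 4, E 5} :=
  mem_span_E45_iff.mpr (by simp [br])

theorem br_eq_zero_of_mem_span_E45 {Z : GV} (hZ : Z ∈ Submodule.span ℝ {E 4, E 5}) (Y : GV) :
    br Z Y = 0 := by
  obtain ⟨h0, h1, h2, h3⟩ := mem_span_E45_iff.mp hZ
  funext i
  fin_cases i <;> simp [br, h0, h1, h2, h3]

theorem mem_span_E45_of_forall_br_eq_zero {W : GV} (h : ∀ Y, br W Y = 0) :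
    W ∈ Submodule.span ℝ {E 4, E 5} := by
  have h0 := congrFun (h (E 0)) 4
  have h1 := congrFun (h (E 0)) 5
  have h2 := congrFun (h (E 2)) 4
  have h3 := congrFun (h (E 2)) 5
  simp [br, E] at h0 h1 h2 h3
  exact mem_span_E45_iff.mpr ⟨h2, h3, h0, h1⟩

theorem Integrable.br_apply_eq_apply_br {J : Module.End ℝ GV} (hint : Integrable J) {Z : GV}
    (hZ : Z ∈ Submodule.span ℝ {E 4, E 5}) (Y : GV) : br (J Z) (J Y) = J (br (J Z) Y) := by
  simpa [br_eq_zero_of_mem_span_E45 hZ] using hint Z Y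

/-- every integrable complex structure on `g` preserves
`[g,g] = span(E₅,E₆)`. -/
theorem stmt0 (J : Module.End ℝ GV) (hJ : IsCpxStr J) (hint : Integrable J) :
    Submodule.map J (Submodule.span ℝ {E 4, E 5}) = Submodule.span ℝ {E 4, E 5} := by
  by_cases hcentral : ∀ Z ∈ Submodule.span ℝ {E 4, E 5}, J Z ∈ Submodule.span ℝ {E 4, E 5}
  · exact map_eq_self_of_map_le hJ (Submodule.map_le_iff_le_comap.mpr hcentral)
  push Not at hcentral
  obtain ⟨Z, hZ, hJZ⟩ := hcentral
  obtain ⟨Y, hY⟩ : ∃ Y, br (J Z) Y ≠ 0 := by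
    by_contra! h
    exact hJZ (mem_span_E45_of_forall_br_eq_zero h)
  refine map_eq_self_of_finrank_eq_two hJ finrank_span_E45 (br_mem_span_E45 _ _) hY ?_
  rw [← hint.br_apply_eq_apply_br hZ]
  exact br_mem_span_E45 _ _

end
end

section
/- Let J ∈ C⁺(g) admit a basis (α¹,α²,α³) of its space of (1,0)-forms with α¹∧α²∧α³∧ω̄¹∧ω̄²∧ω̄³ ≠ 0. Then there exist a,b,c,d,x,y ∈ ℂ such that, setting u = −ad+bc, the forms β¹ = ω¹ + a·ω̄¹ + b·ω̄², β² = ω² + c·ω̄¹ + d·ω̄², β³ = ω³ + x·ω̄¹ + y·ω̄² + u·ω̄³ constitute a basis of the space of (1,0)-forms of J. -/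
open scoped ComplexOrder

noncomputable section

lemma br_zero (U V : GV) : br U V 0 = 0 := rfl
lemma br_one (U V : GV) : br U V 1 = 0 := rfl
lemma br_two (U V : GV) : br U V 2 = 0 := rfl
lemma br_three (U V : GV) : br U V 3 = 0 := rfl
lemma br_four (U V : GV) : br U V 4 = -(U 0 * V 2 - U 2 * V 0) + (U 1 * V 3 - U 3 * V 1) := rfl

lemma br_five (U V : GV) : br U V 5 = -(U 0 * V 3 - U 3 * V 0) - (U 1 * V 2 - U 2 * V 1) := rfl

lemma ev_addl (α β : MC) (v : GV) : ev (α + β) v = ev α v + ev β v := by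
  simp [ev, add_mul, Finset.sum_add_distrib]

lemma ev_smull (c : ℂ) (α : MC) (v : GV) : ev (c • α) v = c * ev α v := by
  simp [ev, Finset.mul_sum, mul_assoc]

lemma ev_addr (α : MC) (u v : GV) : ev α (u + v) = ev α u + ev α v := by
  simp [ev, mul_add, Finset.sum_add_distrib]

lemma mem_holSub {J : Module.End ℝ GV} {α : MC} (h : α ∈ holSub J) :
    ∀ v : GV, ev α (J v) = Complex.I * ev α v := h

lemma ev_w1_br (U V : GV) : ev w1 (br U V) = 0 := by
  simp [ev, w1, eC, Fin.sum_univ_six, br_zero, br_one, br_two, br_three]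

lemma ev_w1b_br (U V : GV) : ev w1b (br U V) = 0 := by
  simp [ev, w1b, eC, Fin.sum_univ_six, br_zero, br_one, br_two, br_three]

lemma ev_w2_br (U V : GV) : ev w2 (br U V) = 0 := by
  simp [ev, w2, eC, Fin.sum_univ_six, br_zero, br_one, br_two, br_three]

lemma ev_w2b_br (U V : GV) : ev w2b (br U V) = 0 := by
  simp [ev, w2b, eC, Fin.sum_univ_six, br_zero, br_one, br_two, br_three]

lemma ev_w3_br (U V : GV) : ev w3 (br U V) = -(ev w1 U * ev w2 V - ev w1 V * ev w2 U) := by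
  simp [ev, w1, w2, w3, eC, Fin.sum_univ_six, br_four, br_five]
  linear_combination ((U 1 : ℂ) * (V 3 : ℂ) - (U 3 : ℂ) * (V 1 : ℂ)) * Complex.I_sq

lemma ev_w3b_br (U V : GV) : ev w3b (br U V) = -(ev w1b U * ev w2b V - ev w1b V * ev w2b U) := by
  simp [ev, w1b, w2b, w3b, eC, Fin.sum_univ_six, br_four, br_five]
  linear_combination ((U 1 : ℂ) * (V 3 : ℂ) - (U 3 : ℂ) * (V 1 : ℂ)) * Complex.I_sq


lemma indep_of_wedge (v : Fin 6 → MC)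
    (hw : ι (v 0) * ι (v 1) * ι (v 2) * ι (v 3) * ι (v 4) * ι (v 5) ≠ 0) :
    LinearIndependent ℂ v := by
  by_contra h
  apply hw
  have h0 := AlternatingMap.map_linearDependent (ExteriorAlgebra.ιMulti ℂ 6) v h
  rw [ExteriorAlgebra.ιMulti_apply] at h0
  simp only [List.ofFn_succ, List.prod_cons, List.ofFn_zero, List.prod_nil, Fin.succ_zero_eq_one,
    mul_one] at h0
  simpa [ι, mul_assoc] using h0

lemma key_int {J : Module.End ℝ GV} (hI : Integrable J) {α : MC} (hα : α ∈ holSub J)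
    (X Y : GV) :
    ev α (br (J X) (J Y)) =
      ev α (br X Y) + Complex.I * ev α (br (J X) Y) + Complex.I * ev α (br X (J Y)) := by
  have h := hI X Y
  have hα' : ∀ v : GV, ev α (J v) = Complex.I * ev α v := hα
  rw [h, ev_addr, ev_addr, hα', hα']

lemma exists_det_ne (A B : GV → ℂ)
    (h : ∀ s t : ℂ, (∀ X : GV, s * A X + t * B X = 0) → s = 0 ∧ t = 0) :
    ∃ X Y : GV, A X * B Y - A Y * B X ≠ 0 := by
  by_contra hc
  push_neg at hc
  have hA : ∃ X, A X ≠ 0 := by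
    by_contra hA
    push_neg at hA
    have := (h 1 0 (fun X => by simp [hA X])).1
    exact one_ne_zero this
  obtain ⟨X₀, hX₀⟩ := hA
  have : ∀ Y, (B X₀ / A X₀) * A Y + (-1) * B Y = 0 := by
    intro Y
    have := hc X₀ Y
    field_simp
    linear_combination -this
  exact absurd (h _ _ this).2 (by norm_num)


lemma cons_val_five {α : Type*} (a b c d e f : α) : ![a, b, c, d, e, f] 5 = f := rfl
lemma cons_val_four' {α : Type*} (a b c d e f : α) : ![a, b, c, d, e, f] 4 = e := rfl
lemma cons_val_three' {α : Type*} (a b c d e f : α) : ![a, b, c, d, e, f] 3 = d := rfl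
lemma cons_val_two' {α : Type*} (a b c d e f : α) : ![a, b, c, d, e, f] 2 = c := rfl
lemma cons_val_one' {α : Type*} (a b c d e f : α) : ![a, b, c, d, e, f] 1 = b := rfl
lemma cons_val_zero' {α : Type*} (a b c d e f : α) : ![a, b, c, d, e, f] 0 = a := rfl

lemma span_triple_range (x y z : MC) :
    Submodule.span ℂ {x, y, z} = Submodule.span ℂ (Set.range ![x, y, z]) := by
  congr 1
  ext w
  simp only [Matrix.range_cons, Matrix.range_empty, Set.union_empty, Set.mem_union,
    Set.mem_insert_iff, Set.mem_singleton_iff]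

lemma wIndep : LinearIndependent ℂ ![w1, w2, w3, w1b, w2b, w3b] := by
  rw [Fintype.linearIndependent_iff]
  intro g hg
  rw [Fin.sum_univ_six] at hg
  simp only [cons_val_zero', cons_val_one', cons_val_two', cons_val_three', cons_val_four',
    cons_val_five] at hg
  have h0 := congrFun hg 0
  have h1 := congrFun hg 1
  have h2 := congrFun hg 2
  have h3 := congrFun hg 3
  have h4 := congrFun hg 4
  have h5 := congrFun hg 5
  simp only [w1, w2, w3, w1b, w2b, w3b, eC, Pi.add_apply, Pi.sub_apply, Pi.smul_apply,
    Pi.single_apply, smul_eq_mul, Pi.zero_apply] at h0 h1 h2 h3 h4 h5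
  simp only [Fin.isValue, show ((0:Fin 6)=1)=False by simp, show ((1:Fin 6)=0)=False by simp,
    show ((0:Fin 6)=2)=False by simp, show ((0:Fin 6)=3)=False by simp,
    show ((0:Fin 6)=4)=False by simp, show ((0:Fin 6)=5)=False by simp,
    show ((1:Fin 6)=2)=False by simp, show ((1:Fin 6)=3)=False by simp,
    show ((1:Fin 6)=4)=False by simp, show ((1:Fin 6)=5)=False by simp,
    show ((2:Fin 6)=0)=False by simp, show ((2:Fin 6)=1)=False by simp,
    show ((2:Fin 6)=3)=False by simp, show ((2:Fin 6)=4)=False by simp,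
    show ((2:Fin 6)=5)=False by simp, show ((3:Fin 6)=0)=False by simp,
    show ((3:Fin 6)=1)=False by simp, show ((3:Fin 6)=2)=False by simp,
    show ((3:Fin 6)=4)=False by simp, show ((3:Fin 6)=5)=False by simp,
    show ((4:Fin 6)=0)=False by simp, show ((4:Fin 6)=1)=False by simp,
    show ((4:Fin 6)=2)=False by simp, show ((4:Fin 6)=3)=False by simp,
    show ((4:Fin 6)=5)=False by simp, show ((5:Fin 6)=0)=False by simp,
    show ((5:Fin 6)=1)=False by simp, show ((5:Fin 6)=2)=False by simp,
    show ((5:Fin 6)=3)=False by simp, show ((5:Fin 6)=4)=False by simp,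
    if_false, if_true, eq_self_iff_true, add_zero, zero_add, mul_zero, mul_one, sub_zero,
    zero_sub, mul_neg] at h0 h1 h2 h3 h4 h5
  have hI := Complex.I_ne_zero
  have e1 : g 0 - g 3 = 0 := by
    have h : Complex.I * (g 0 - g 3) = 0 := by linear_combination h1
    rcases mul_eq_zero.mp h with h | h
    · exact absurd h hI
    · exact h
  have e2 : g 1 - g 4 = 0 := by
    have h : Complex.I * (g 1 - g 4) = 0 := by linear_combination h3
    rcases mul_eq_zero.mp h with h | h
    · exact absurd h hI
    · exact h
  have e3 : g 2 - g 5 = 0 := by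
    have h : Complex.I * (g 2 - g 5) = 0 := by linear_combination h5
    rcases mul_eq_zero.mp h with h | h
    · exact absurd h hI
    · exact h
  intro i
  fin_cases i
  · show g 0 = 0
    linear_combination (h0 + e1) / 2
  · show g 1 = 0
    linear_combination (h2 + e2) / 2
  · show g 2 = 0
    linear_combination (h4 + e3) / 2
  · show g 3 = 0
    linear_combination (h0 - e1) / 2
  · show g 4 = 0
    linear_combination (h2 - e2) / 2
  · show g 5 = 0
    linear_combination (h4 - e3) / 2

/-- echelon form for `(1,0)`-bases of structures at finite distance from `J₀`. -/
theorem stmt3 (J : Module.End ℝ GV) (hJ : J ∈ Cplus) (a1 a2 a3 : MC)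
    (hb : IsHolBasis J a1 a2 a3)
    (hw : ι a1 * ι a2 * ι a3 * ι w1b * ι w2b * ι w3b ≠ 0) :
    ∃ a b c d x y : ℂ,
      IsHolBasis J (w1 + a • w1b + b • w2b) (w2 + c • w1b + d • w2b)
        (w3 + x • w1b + y • w2b + (-(a*d) + b*c) • w3b) := by
  obtain ⟨hcs, hint, hpos⟩ := hJ
  obtain ⟨hind3, hspan⟩ := hb
  have h6 : LinearIndependent ℂ ![a1, a2, a3, w1b, w2b, w3b] := by
    apply indep_of_wedge
    simpa using hw
  have hcard : Fintype.card (Fin 6) = Module.finrank ℂ MC := by simp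
  set b6 : Module.Basis (Fin 6) ℂ MC := basisOfLinearIndependentOfCardEqFinrank h6 hcard with hb6def
  have hb6 : ⇑b6 = ![a1, a2, a3, w1b, w2b, w3b] :=
    coe_basisOfLinearIndependentOfCardEqFinrank h6 hcard
  have decomp : ∀ w : MC, w + (-(b6.repr w 3)) • w1b + (-(b6.repr w 4)) • w2b
      + (-(b6.repr w 5)) • w3b
      = b6.repr w 0 • a1 + b6.repr w 1 • a2 + b6.repr w 2 • a3 := by
    intro w
    have hs := b6.sum_repr w
    rw [Fin.sum_univ_six, hb6] at hs
    simp only [cons_val_zero', cons_val_one', cons_val_two', cons_val_three', cons_val_four',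
      cons_val_five] at hs
    linear_combination (norm := module) (-1 : ℂ) • hs
  set aa := -(b6.repr w1 3) with haa
  set bb := -(b6.repr w1 4) with hbb
  set r1 := -(b6.repr w1 5) with hr1d
  set cc := -(b6.repr w2 3) with hcc
  set dd := -(b6.repr w2 4) with hdd
  set r2 := -(b6.repr w2 5) with hr2d
  set xx := -(b6.repr w3 3) with hxx
  set yy := -(b6.repr w3 4) with hyy
  set r3 := -(b6.repr w3 5) with hr3d
  have memtriple : ∀ c0 c1 c2 : ℂ, c0 • a1 + c1 • a2 + c2 • a3 ∈ holSub J := by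
    intro c0 c1 c2
    rw [← hspan]
    refine add_mem (add_mem (Submodule.smul_mem _ _ (Submodule.subset_span ?_))
      (Submodule.smul_mem _ _ (Submodule.subset_span ?_)))
      (Submodule.smul_mem _ _ (Submodule.subset_span ?_)) <;> simp
  have hm1 : w1 + aa • w1b + bb • w2b + r1 • w3b ∈ holSub J := by
    rw [haa, hbb, hr1d, decomp w1]; exact memtriple _ _ _
  have hm2 : w2 + cc • w1b + dd • w2b + r2 • w3b ∈ holSub J := by
    rw [hcc, hdd, hr2d, decomp w2]; exact memtriple _ _ _
  have hm3 : w3 + xx • w1b + yy • w2b + r3 • w3b ∈ holSub J := by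
    rw [hxx, hyy, hr3d, decomp w3]; exact memtriple _ _ _
  have hpair : ∀ s t : ℂ, (s • w1b + t • w2b) ∈ holSub J → s = 0 ∧ t = 0 := by
    intro s t hmem
    rw [← hspan] at hmem
    rw [Submodule.mem_span_insert] at hmem
    obtain ⟨c1, z1, hz1, he1⟩ := hmem
    rw [Submodule.mem_span_insert] at hz1
    obtain ⟨c2, z2, hz2, he2⟩ := hz1
    rw [Submodule.mem_span_singleton] at hz2
    obtain ⟨c3, he3⟩ := hz2
    subst he3; subst he2
    have hrel : ∑ i : Fin 6, (![c1, c2, c3, -s, -t, 0] : Fin 6 → ℂ) i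
        • (![a1, a2, a3, w1b, w2b, w3b] : Fin 6 → MC) i = 0 := by
      rw [Fin.sum_univ_six]
      simp only [cons_val_zero', cons_val_one', cons_val_two', cons_val_three', cons_val_four',
        cons_val_five]
      linear_combination (norm := module) (-1 : ℂ) • he1
    have hz := Fintype.linearIndependent_iff.mp h6 _ hrel
    constructor
    · have := hz 3
      simp only [cons_val_three'] at this
      linear_combination -this
    · have := hz 4
      simp only [cons_val_four'] at this
      linear_combination -this
  obtain ⟨X₀, Y₀, hDne⟩ : ∃ X Y : GV,
      (ev w1b X + Complex.I * ev w1b (J X)) * (ev w2b Y + Complex.I * ev w2b (J Y))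
        - (ev w1b Y + Complex.I * ev w1b (J Y)) * (ev w2b X + Complex.I * ev w2b (J X)) ≠ 0 := by
    apply exists_det_ne
    intro s t hst
    apply hpair s t
    intro vv
    have h1 := hst vv
    simp only [ev_addl, ev_smull]
    linear_combination (-Complex.I) * h1
      + (s * ev w1b (J vv) + t * ev w2b (J vv)) * Complex.I_sq
  have evb1 : ∀ U V : GV, ev (w1 + aa • w1b + bb • w2b + r1 • w3b) (br U V)
      = -r1 * (ev w1b U * ev w2b V - ev w1b V * ev w2b U) := by
    intro U V
    simp only [ev_addl, ev_smull, ev_w1_br, ev_w1b_br, ev_w2b_br, ev_w3b_br]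
    ring
  have evb2 : ∀ U V : GV, ev (w2 + cc • w1b + dd • w2b + r2 • w3b) (br U V)
      = -r2 * (ev w1b U * ev w2b V - ev w1b V * ev w2b U) := by
    intro U V
    simp only [ev_addl, ev_smull, ev_w2_br, ev_w1b_br, ev_w2b_br, ev_w3b_br]
    ring
  have evb3 : ∀ U V : GV, ev (w3 + xx • w1b + yy • w2b + r3 • w3b) (br U V)
      = -(ev w1 U * ev w2 V - ev w1 V * ev w2 U)
        - r3 * (ev w1b U * ev w2b V - ev w1b V * ev w2b U) := by
    intro U V
    simp only [ev_addl, ev_smull, ev_w3_br, ev_w1b_br, ev_w2b_br, ev_w3b_br]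
    ring
  have hr1 : r1 = 0 := by
    have hk := key_int hint hm1 X₀ Y₀
    simp only [evb1] at hk
    have h0 : r1 * ((ev w1b X₀ + Complex.I * ev w1b (J X₀))
        * (ev w2b Y₀ + Complex.I * ev w2b (J Y₀))
        - (ev w1b Y₀ + Complex.I * ev w1b (J Y₀))
        * (ev w2b X₀ + Complex.I * ev w2b (J X₀))) = 0 := by
      linear_combination hk + r1 * (ev w1b (J X₀) * ev w2b (J Y₀)
        - ev w1b (J Y₀) * ev w2b (J X₀)) * Complex.I_sq
    rcases mul_eq_zero.mp h0 with h | h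
    · exact h
    · exact absurd h hDne
  have hr2 : r2 = 0 := by
    have hk := key_int hint hm2 X₀ Y₀
    simp only [evb2] at hk
    have h0 : r2 * ((ev w1b X₀ + Complex.I * ev w1b (J X₀))
        * (ev w2b Y₀ + Complex.I * ev w2b (J Y₀))
        - (ev w1b Y₀ + Complex.I * ev w1b (J Y₀))
        * (ev w2b X₀ + Complex.I * ev w2b (J X₀))) = 0 := by
      linear_combination hk + r2 * (ev w1b (J X₀) * ev w2b (J Y₀)
        - ev w1b (J Y₀) * ev w2b (J X₀)) * Complex.I_sq
    rcases mul_eq_zero.mp h0 with h | h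
    · exact h
    · exact absurd h hDne
  have hm1' : w1 + aa • w1b + bb • w2b ∈ holSub J := by
    have h := hm1
    rw [hr1, zero_smul, add_zero] at h
    exact h
  have hm2' : w2 + cc • w1b + dd • w2b ∈ holSub J := by
    have h := hm2
    rw [hr2, zero_smul, add_zero] at h
    exact h
  have hC : ∀ v : GV, ev w1 v + Complex.I * ev w1 (J v)
      = -aa * (ev w1b v + Complex.I * ev w1b (J v))
        - bb * (ev w2b v + Complex.I * ev w2b (J v)) := by
    intro v
    have hg := mem_holSub hm1' v
    simp only [ev_addl, ev_smull] at hg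
    linear_combination Complex.I * hg
      + (ev w1 v + aa * ev w1b v + bb * ev w2b v) * Complex.I_sq
  have hD : ∀ v : GV, ev w2 v + Complex.I * ev w2 (J v)
      = -cc * (ev w1b v + Complex.I * ev w1b (J v))
        - dd * (ev w2b v + Complex.I * ev w2b (J v)) := by
    intro v
    have hg := mem_holSub hm2' v
    simp only [ev_addl, ev_smull] at hg
    linear_combination Complex.I * hg
      + (ev w2 v + cc * ev w1b v + dd * ev w2b v) * Complex.I_sq
  have hr3 : r3 = -(aa * dd) + bb * cc := by
    have hk3 := key_int hint hm3 X₀ Y₀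
    simp only [evb3] at hk3
    have h03 : (aa * dd - bb * cc + r3)
        * ((ev w1b X₀ + Complex.I * ev w1b (J X₀))
          * (ev w2b Y₀ + Complex.I * ev w2b (J Y₀))
          - (ev w1b Y₀ + Complex.I * ev w1b (J Y₀))
          * (ev w2b X₀ + Complex.I * ev w2b (J X₀))) = 0 := by
      linear_combination hk3
        - hC X₀ * (ev w2 Y₀ + Complex.I * ev w2 (J Y₀))
        - (-aa * (ev w1b X₀ + Complex.I * ev w1b (J X₀))
            - bb * (ev w2b X₀ + Complex.I * ev w2b (J X₀))) * hD Y₀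
        + hC Y₀ * (ev w2 X₀ + Complex.I * ev w2 (J X₀))
        + (-aa * (ev w1b Y₀ + Complex.I * ev w1b (J Y₀))
            - bb * (ev w2b Y₀ + Complex.I * ev w2b (J Y₀))) * hD X₀
        + (ev w1 (J X₀) * ev w2 (J Y₀) - ev w1 (J Y₀) * ev w2 (J X₀)
            + r3 * (ev w1b (J X₀) * ev w2b (J Y₀) - ev w1b (J Y₀) * ev w2b (J X₀)))
          * Complex.I_sq
    rcases mul_eq_zero.mp h03 with h | h
    · linear_combination h
    · exact absurd h hDne
  have hm3' : w3 + xx • w1b + yy • w2b + (-(aa * dd) + bb * cc) • w3b ∈ holSub J := by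
    rw [← hr3]; exact hm3
  have hβind : LinearIndependent ℂ ![w1 + aa • w1b + bb • w2b, w2 + cc • w1b + dd • w2b,
      w3 + xx • w1b + yy • w2b + (-(aa * dd) + bb * cc) • w3b] := by
    rw [Fintype.linearIndependent_iff]
    intro g hg
    rw [Fin.sum_univ_three] at hg
    simp only [Matrix.cons_val_zero, Matrix.cons_val_one, Matrix.head_cons,
      Matrix.cons_val_two, Matrix.tail_cons] at hg
    have hrel : ∑ i : Fin 6, (![g 0, g 1, g 2, g 0 * aa + g 1 * cc + g 2 * xx,
        g 0 * bb + g 1 * dd + g 2 * yy, g 2 * (-(aa * dd) + bb * cc)] : Fin 6 → ℂ) i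
        • (![w1, w2, w3, w1b, w2b, w3b] : Fin 6 → MC) i = 0 := by
      rw [Fin.sum_univ_six]
      simp only [cons_val_zero', cons_val_one', cons_val_two', cons_val_three', cons_val_four',
        cons_val_five]
      linear_combination (norm := module) hg
    have hz := Fintype.linearIndependent_iff.mp wIndep _ hrel
    intro i
    fin_cases i
    · have := hz 0; simpa using this
    · have := hz 1; simpa using this
    · have := hz 2; simpa using this
  refine ⟨aa, bb, cc, dd, xx, yy, hβind, ?_⟩
  have hle : Submodule.span ℂ {w1 + aa • w1b + bb • w2b, w2 + cc • w1b + dd • w2b,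
      w3 + xx • w1b + yy • w2b + (-(aa * dd) + bb * cc) • w3b} ≤ holSub J := by
    rw [Submodule.span_le]
    rintro z hz
    simp only [Set.mem_insert_iff, Set.mem_singleton_iff] at hz
    rcases hz with rfl | rfl | rfl
    · exact hm1'
    · exact hm2'
    · exact hm3'
  have hfr1 : Module.finrank ℂ (Submodule.span ℂ ({w1 + aa • w1b + bb • w2b,
      w2 + cc • w1b + dd • w2b,
      w3 + xx • w1b + yy • w2b + (-(aa * dd) + bb * cc) • w3b} : Set MC)) = 3 := by
    rw [span_triple_range]
    have h := finrank_span_eq_card hβind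
    simpa using h
  have hfr2 : Module.finrank ℂ (holSub J) = 3 := by
    rw [← hspan, span_triple_range]
    have h := finrank_span_eq_card hind3
    simpa using h
  exact Submodule.eq_of_le_of_finrank_le hle (by rw [hfr1, hfr2])

end
end

section
/- For every X ∈ M₂(ℂ): the trace of X·X̄ is a real number, det(X·X̄) = |det X|² ≥ 0, and tr(X·X̄) + 2·|det X| ≥ 0. Consequently the two eigenvalues of X·X̄ are either complex conjugates of one another or are both real with non-negative product. -/
open scoped ComplexOrder

noncomputable section

/-! Complex conjugation commutes with trace and determinant, and `tr (A * B) = tr (B * A)`, so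
`tr (X * X̄)` is real and `det (X * X̄) = |det X|²`. For `X = !![a, b; c, d]`,
`Re tr (X * X̄) = |a|² + |d|² + 2 Re (b c̄) ≥ |a|² + |d|² - 2 |b c|` while `|det X| ≥ |b c| - |a d|`,
so `Re tr (X * X̄) + 2 |det X| ≥ (|a| - |d|)²`. Finally, two complex numbers with real sum and
non-negative real product are either conjugate or real of the same sign. -/

open ComplexConjugate Polynomial

namespace Matrix

variable {n R : Type*} [Fintype n] [CommRing R] [StarRing R]

theorem conj_trace_mul_map_conj (X : Matrix n n R) :
    conj (X * X.map conj).trace = (X * X.map conj).trace := by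
  rw [AddMonoidHom.map_trace, Matrix.map_mul, Matrix.map_map, trace_mul_comm]
  congr
  ext
  simp

theorem det_mul_map_conj [DecidableEq n] (X : Matrix n n R) :
    (X * X.map conj).det = X.det * conj X.det := by
  rw [det_mul, ← RingHom.mapMatrix_apply, ← RingHom.map_det]

theorem trace_mul_map_conj_fin_two_re (X : Matrix (Fin 2) (Fin 2) ℂ) :
    (X * X.map conj).trace.re = ‖X 0 0‖ ^ 2 + ‖X 1 1‖ ^ 2 + 2 * (X 0 1 * conj (X 1 0)).re := by
  simp only [trace_fin_two, mul_apply, Fin.sum_univ_two, map_apply, Complex.add_re,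
    Complex.mul_re, Complex.conj_re, Complex.conj_im, Complex.sq_norm, Complex.normSq_apply]
  ring

theorem trace_mul_map_conj_re_add_two_norm_det_nonneg (X : Matrix (Fin 2) (Fin 2) ℂ) :
    0 ≤ (X * X.map conj).trace.re + 2 * ‖X.det‖ := by
  have hre : -(‖X 0 1‖ * ‖X 1 0‖) ≤ (X 0 1 * conj (X 1 0)).re := by
    simpa using neg_le_of_abs_le (Complex.abs_re_le_norm (X 0 1 * conj (X 1 0)))
  have hdet : ‖X 0 1‖ * ‖X 1 0‖ - ‖X 0 0‖ * ‖X 1 1‖ ≤ ‖X.det‖ := by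
    simpa [det_fin_two, norm_sub_rev] using norm_sub_norm_le (X 0 1 * X 1 0) (X 0 0 * X 1 1)
  rw [trace_mul_map_conj_fin_two_re]
  nlinarith [sq_nonneg (‖X 0 0‖ - ‖X 1 1‖)]

theorem trace_eq_add_and_det_eq_mul_of_charpoly_eq {K : Type*} [Field K] [IsAlgClosed K]
    [DecidableEq n] {A : Matrix n n K} {l m : K} (h : A.charpoly = (X - C l) * (X - C m)) :
    A.trace = l + m ∧ A.det = l * m := by
  have hroots : A.charpoly.roots = {l} + {m} := by
    rw [h, roots_mul (by simpa [← h] using A.charpoly_monic.ne_zero), roots_X_sub_C, roots_X_sub_C]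
  simp [trace_eq_sum_roots_charpoly, det_eq_prod_roots_charpoly, hroots]

end Matrix

theorem Complex.eq_conj_or_real_of_add_real_of_mul_nonneg {l m : ℂ} (hsum : (l + m).im = 0)
    (hprod : 0 ≤ l * m) : m = conj l ∨ (l.im = 0 ∧ m.im = 0 ∧ 0 ≤ l.re * m.re) := by
  obtain ⟨hre, him⟩ := Complex.nonneg_iff.mp hprod
  simp only [add_im, mul_re, mul_im] at hsum hre him
  have hm : m.im = -l.im := by linarith
  rw [hm] at hre him
  by_cases hl : l.im = 0
  · right
    exact ⟨hl, by linarith, by nlinarith⟩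
  · left
    have : m.re = l.re := mul_left_cancel₀ hl (by linarith)
    exact Complex.ext (by simp [this]) (by simp [hm])

/-- trace of `X·X̄` is real, `det(X·X̄) = |det X|² ≥ 0`,
`tr(X·X̄) + 2|det X| ≥ 0`; hence the eigenvalues of `X·X̄` are either complex
conjugates or both real with non-negative product. -/
theorem stmt4 (X : Matrix (Fin 2) (Fin 2) ℂ) :
    ((X * X.map (starRingEnd ℂ)).trace).im = 0 ∧
    (X * X.map (starRingEnd ℂ)).det = ((‖X.det‖ : ℝ) : ℂ) ^ 2 ∧
    0 ≤ (X * X.map (starRingEnd ℂ)).det ∧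
    0 ≤ ((X * X.map (starRingEnd ℂ)).trace).re + 2 * ‖X.det‖ ∧
    (∀ l m : ℂ, (X * X.map (starRingEnd ℂ)).charpoly =
        (Polynomial.X - Polynomial.C l) * (Polynomial.X - Polynomial.C m) →
      m = (starRingEnd ℂ) l ∨ (l.im = 0 ∧ m.im = 0 ∧ 0 ≤ l.re * m.re)) := by
  have htr : (X * X.map conj).trace.im = 0 :=
    Complex.conj_eq_iff_im.mp X.conj_trace_mul_map_conj
  have hdet : (X * X.map conj).det = ((‖X.det‖ : ℝ) : ℂ) ^ 2 := by
    rw [X.det_mul_map_conj, Complex.mul_conj, Complex.normSq_eq_norm_sq, Complex.ofReal_pow]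
  have hdet_nonneg : 0 ≤ (X * X.map conj).det := by
    rw [hdet]; positivity
  refine ⟨htr, hdet, hdet_nonneg, X.trace_mul_map_conj_re_add_two_norm_det_nonneg, ?_⟩
  intro l m h
  obtain ⟨hsum, hprod⟩ := Matrix.trace_eq_add_and_det_eq_mul_of_charpoly_eq h
  exact Complex.eq_conj_or_real_of_add_real_of_mul_nonneg (hsum ▸ htr) (hprod ▸ hdet_nonneg)

end
end

section
/- Let X = [[a,b],[c,d]] ∈ M₂(ℂ) satisfy det(I₂ − X·X̄) ≠ 0, set u = bc − ad, and define the ℝ-linear map T : ℂ² → ℂ² by T(p,q) = (u·p̄ − a·p − c·q, u·q̄ − b·p − d·q). Then the real dimension of the image of T equals 0 if X = 0; equals 2 if X ≠ 0 and det X = 0; and equals 4 if det X ≠ 0. -/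
open scoped ComplexOrder

noncomputable section

/-- Auxiliary: if the range of an `ℝ`-linear `T` coincides with the complex line `ℂ·v`,
`v ≠ 0`, then its real rank is `2`. -/
lemma aux_rank2 (T : ℂ × ℂ →ₗ[ℝ] ℂ × ℂ) (v : ℂ × ℂ) (hv : v ≠ 0)
    (h1 : ∀ x, T x ∈ Submodule.span ℂ {v})
    (h2 : ∀ t : ℂ, ∃ x, T x = t • v) :
    Module.finrank ℝ (LinearMap.range T) = 2 := by
  have hrange : LinearMap.range T = (Submodule.span ℂ {v}).restrictScalars ℝ := by
    apply le_antisymm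
    · rintro x ⟨y, rfl⟩
      simpa using h1 y
    · intro x hx
      simp only [Submodule.restrictScalars_mem, Submodule.mem_span_singleton] at hx
      obtain ⟨t, rfl⟩ := hx
      obtain ⟨y, hy⟩ := h2 t
      exact ⟨y, hy⟩
  rw [hrange]
  have h2' : Module.finrank ℝ ((Submodule.span ℂ {v}).restrictScalars ℝ)
      = 2 * Module.finrank ℂ (Submodule.span ℂ {v}) := by
    rw [← Complex.finrank_real_complex]
    exact (Module.finrank_mul_finrank ℝ ℂ (Submodule.span ℂ {v})).symm
  rw [h2', finrank_span_singleton hv]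

/-- Auxiliary: explicit form of the nondegeneracy hypothesis. -/
lemma aux_det (a b c d : ℂ)
    (hdet : (1 - !![a,b;c,d] * (!![a,b;c,d]).map (starRingEnd ℂ)).det ≠ 0) :
    (1 - a * (starRingEnd ℂ) a - b * (starRingEnd ℂ) c)
        * (1 - c * (starRingEnd ℂ) b - d * (starRingEnd ℂ) d)
      - (a * (starRingEnd ℂ) b + b * (starRingEnd ℂ) d)
        * (c * (starRingEnd ℂ) a + d * (starRingEnd ℂ) c) ≠ 0 := by
  intro h
  apply hdet
  have hm : (1 - !![a,b;c,d] * (!![a,b;c,d]).map (starRingEnd ℂ)) =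
      !![1 - (a * (starRingEnd ℂ) a + b * (starRingEnd ℂ) c),
         -(a * (starRingEnd ℂ) b + b * (starRingEnd ℂ) d);
         -(c * (starRingEnd ℂ) a + d * (starRingEnd ℂ) c),
         1 - (c * (starRingEnd ℂ) b + d * (starRingEnd ℂ) d)] := by
    ext i j
    fin_cases i <;> fin_cases j <;>
      simp [Matrix.mul_apply, Matrix.map_apply, Fin.sum_univ_two, Matrix.one_apply,
        Matrix.vecMul, dotProduct, Matrix.vecHead, Matrix.vecTail] <;> ring
  rw [hm, Matrix.det_fin_two_of]
  linear_combination h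

/-- the real rank of `T(p,q) = (u·p̄ − a·p − c·q, u·q̄ − b·p − d·q)`,
`u = bc − ad`, is `0`, `2` or `4` according to `X = 0`, `X ≠ 0 ∧ det X = 0`, `det X ≠ 0`. -/
theorem stmt7 (a b c d : ℂ)
    (hdet : (1 - !![a,b;c,d] * (!![a,b;c,d]).map (starRingEnd ℂ)).det ≠ 0)
    (T : ℂ × ℂ →ₗ[ℝ] ℂ × ℂ)
    (hT : ∀ p q : ℂ, T (p, q) =
      ((b*c - a*d) * (starRingEnd ℂ) p - a*p - c*q,
       (b*c - a*d) * (starRingEnd ℂ) q - b*p - d*q)) :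
    (!![a,b;c,d] = 0 → Module.finrank ℝ (LinearMap.range T) = 0) ∧
    (!![a,b;c,d] ≠ 0 → (!![a,b;c,d]).det = 0 → Module.finrank ℝ (LinearMap.range T) = 2) ∧
    ((!![a,b;c,d]).det ≠ 0 → Module.finrank ℝ (LinearMap.range T) = 4) := by
  refine ⟨?_, ?_, ?_⟩
  · -- X = 0 case
    intro h0
    have ha : a = 0 := by simpa using Matrix.ext_iff.mpr h0 0 0
    have hb : b = 0 := by simpa using Matrix.ext_iff.mpr h0 0 1
    have hc : c = 0 := by simpa using Matrix.ext_iff.mpr h0 1 0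
    have hd : d = 0 := by simpa using Matrix.ext_iff.mpr h0 1 1
    have hT0 : T = 0 := by
      apply LinearMap.ext
      intro x
      have h := hT x.1 x.2
      simp only [ha, hb, hc, hd] at h
      exact (by simpa using h : T x = (0, 0))
    rw [hT0, LinearMap.range_zero, finrank_bot]
  · -- X ≠ 0, det X = 0 case
    intro hne hd0
    have hu0 : b * c - a * d = 0 := by
      have : a * d - b * c = 0 := by simpa [Matrix.det_fin_two_of] using hd0
      linear_combination -this
    by_cases hab : a = 0 ∧ b = 0
    · -- first row zero, so (c,d) ≠ 0
      obtain ⟨ha, hb⟩ := hab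
      have hcd : ((c, d) : ℂ × ℂ) ≠ 0 := by
        intro h
        apply hne
        have hc : c = 0 := congrArg Prod.fst h
        have hd : d = 0 := congrArg Prod.snd h
        ext i j
        fin_cases i <;> fin_cases j <;> simp [ha, hb, hc, hd]
      apply aux_rank2 T (c, d) hcd
      · intro x
        rw [show T x = _ from hT x.1 x.2]
        rw [Submodule.mem_span_singleton]
        refine ⟨-x.2, ?_⟩
        have : (-x.2) • ((c, d) : ℂ × ℂ) = (-x.2 * c, -x.2 * d) := rfl
        rw [this, Prod.ext_iff]
        constructor <;> simp [ha, hb] <;> ring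
      · intro t
        refine ⟨(0, -t), ?_⟩
        rw [hT 0 (-t)]
        have : t • ((c, d) : ℂ × ℂ) = (t * c, t * d) := rfl
        rw [this, Prod.ext_iff]
        constructor <;> simp [ha, hb] <;> ring
    · -- (a,b) ≠ 0
      have hvne : ((a, b) : ℂ × ℂ) ≠ 0 := by
        intro h
        exact hab ⟨congrArg Prod.fst h, congrArg Prod.snd h⟩
      have hcdmem : ((c, d) : ℂ × ℂ) ∈ Submodule.span ℂ {((a, b) : ℂ × ℂ)} := by
        rw [Submodule.mem_span_singleton]
        by_cases ha : a = 0
        · have hb : b ≠ 0 := fun hb => hab ⟨ha, hb⟩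
          have hc : c = 0 := by
            have : b * c = 0 := by linear_combination hu0 + d * ha
            rcases mul_eq_zero.mp this with h | h
            · exact absurd h hb
            · exact h
          refine ⟨d / b, ?_⟩
          have : (d / b) • ((a, b) : ℂ × ℂ) = (d / b * a, d / b * b) := rfl
          rw [this, Prod.ext_iff]
          constructor
          · simp [ha, hc]
          · field_simp
        · refine ⟨c / a, ?_⟩
          have : (c / a) • ((a, b) : ℂ × ℂ) = (c / a * a, c / a * b) := rfl
          rw [this, Prod.ext_iff]
          constructor
          · field_simp
          · field_simp
            linear_combination hu0
      apply aux_rank2 T (a, b) hvne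
      · intro x
        rw [show T x = _ from hT x.1 x.2]
        have heq : ((b*c - a*d) * (starRingEnd ℂ) x.1 - a*x.1 - c*x.2,
            (b*c - a*d) * (starRingEnd ℂ) x.2 - b*x.1 - d*x.2)
            = (-x.1) • ((a, b) : ℂ × ℂ) + (-x.2) • ((c, d) : ℂ × ℂ) := by
          rw [hu0]
          have h1 : (-x.1) • ((a, b) : ℂ × ℂ) = (-x.1 * a, -x.1 * b) := rfl
          have h2 : (-x.2) • ((c, d) : ℂ × ℂ) = (-x.2 * c, -x.2 * d) := rfl
          rw [h1, h2, Prod.ext_iff]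
          constructor <;> simp <;> ring
        rw [heq]
        exact Submodule.add_mem _
          (Submodule.smul_mem _ _ (Submodule.mem_span_singleton_self _))
          (Submodule.smul_mem _ _ hcdmem)
      · intro t
        refine ⟨(-t, 0), ?_⟩
        rw [hT (-t) 0]
        have : t • ((a, b) : ℂ × ℂ) = (t * a, t * b) := rfl
        rw [this, hu0, Prod.ext_iff]
        constructor <;> simp <;> ring
  · -- det X ≠ 0 case
    intro hdX
    have hdX' : a * d - b * c ≠ 0 := by simpa [Matrix.det_fin_two_of] using hdX
    have hdet' := aux_det a b c d hdet
    have hinj : Function.Injective T := by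
      rw [injective_iff_map_eq_zero T]
      rintro ⟨p, q⟩ hx
      rw [hT p q] at hx
      have h1 : (b*c - a*d) * (starRingEnd ℂ) p - a*p - c*q = 0 := congrArg Prod.fst hx
      have h2 : (b*c - a*d) * (starRingEnd ℂ) q - b*p - d*q = 0 := congrArg Prod.snd hx
      have h3 : ((starRingEnd ℂ) b * (starRingEnd ℂ) c - (starRingEnd ℂ) a * (starRingEnd ℂ) d) * p
          - (starRingEnd ℂ) a * (starRingEnd ℂ) p - (starRingEnd ℂ) c * (starRingEnd ℂ) q = 0 := by
        have h := congrArg (starRingEnd ℂ) h1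
        simp only [map_sub, map_mul, map_zero, Complex.conj_conj] at h
        linear_combination h
      have h4 : ((starRingEnd ℂ) b * (starRingEnd ℂ) c - (starRingEnd ℂ) a * (starRingEnd ℂ) d) * q
          - (starRingEnd ℂ) b * (starRingEnd ℂ) p - (starRingEnd ℂ) d * (starRingEnd ℂ) q = 0 := by
        have h := congrArg (starRingEnd ℂ) h2
        simp only [map_sub, map_mul, map_zero, Complex.conj_conj] at h
        linear_combination h
      have hconj_ne : (starRingEnd ℂ) a * (starRingEnd ℂ) d
          - (starRingEnd ℂ) b * (starRingEnd ℂ) c ≠ 0 := by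
        intro h
        apply hdX'
        have h2 := congrArg (starRingEnd ℂ) h
        simp only [map_sub, map_mul, map_zero, Complex.conj_conj] at h2
        linear_combination h2
      set A := (starRingEnd ℂ) a
      set B := (starRingEnd ℂ) b
      set C := (starRingEnd ℂ) c
      set D := (starRingEnd ℂ) d
      have hK : ((a*d - b*c) * (A*D - B*C)) *
          ((1 - a*A - b*C) * (1 - c*B - d*D) - (a*B + b*D) * (c*A + d*C)) ≠ 0 :=
        mul_ne_zero (mul_ne_zero hdX' hconj_ne) hdet'
      have hp : p = 0 := by
        have key : (((a*d - b*c) * (A*D - B*C)) *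
            ((1 - a*A - b*C) * (1 - c*B - d*D) - (a*B + b*D) * (c*A + d*C))) * p = 0 := by
          linear_combination
            (A*((b*c-a*d)*(B*C-A*D) - B*c - D*d) + B*(A*c + C*d)) * h1 +
            (C*((b*c-a*d)*(B*C-A*D) - B*c - D*d) + D*(A*c + C*d)) * h2 +
            ((b*c-a*d)*((b*c-a*d)*(B*C-A*D) - B*c - D*d)) * h3 +
            ((b*c-a*d)*(A*c + C*d)) * h4
        exact (mul_eq_zero.mp key).resolve_left hK
      have hq : q = 0 := by
        have key : (((a*d - b*c) * (A*D - B*C)) *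
            ((1 - a*A - b*C) * (1 - c*B - d*D) - (a*B + b*D) * (c*A + d*C))) * q = 0 := by
          linear_combination
            (B*((b*c-a*d)*(B*C-A*D) - A*a - C*b) + A*(B*a + D*b)) * h1 +
            (D*((b*c-a*d)*(B*C-A*D) - A*a - C*b) + C*(B*a + D*b)) * h2 +
            ((b*c-a*d)*(B*a + D*b)) * h3 +
            ((b*c-a*d)*((b*c-a*d)*(B*C-A*D) - A*a - C*b)) * h4
        exact (mul_eq_zero.mp key).resolve_left hK
      simp [hp, hq, Prod.ext_iff]
    rw [LinearMap.finrank_range_of_inj hinj]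
    rw [Module.finrank_prod, Complex.finrank_real_complex]


end
end

section
/- The set U = {X ∈ M₂(ℂ) : det(I₂ − X·X̄) > 0 and |det X| < 1} is star-shaped about the origin: if X ∈ U and t ∈ [0,1], then tX ∈ U; in particular det(I₂ − t²·X·X̄) > 0 for all t ∈ [0,1]. -/
/-! For a `2 × 2` matrix `M`, `det (1 - s • M) = 1 - s tr M + s² det M`. With `M = X X̄` the trace
is real and `det M = |det X|² =: D < 1`, so `p(s) = det (1 - s X X̄)` is a real quadratic, and
`p(s) = (1 - s)(1 - s D) + s p(1)` is positive on `[0, 1]` as soon as `p(1) > 0`. Scaling `X`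
by `t` replaces `X X̄` by `t² X X̄` and `|det X|` by `t² |det X|`. -/

open scoped ComplexOrder

noncomputable section

/-- The set `U = {X : det(I − X·X̄) > 0, |det X| < 1}`. -/
def U2 : Set (Matrix (Fin 2) (Fin 2) ℂ) :=
  {X | 0 < (1 - X * X.map (starRingEnd ℂ)).det ∧ ‖X.det‖ < 1}

theorem Matrix.det_one_sub_smul_fin_two {R : Type*} [CommRing R] (M : Matrix (Fin 2) (Fin 2) R)
    (s : R) : (1 - s • M).det = 1 - s * M.trace + s ^ 2 * M.det := by
  simp only [Matrix.det_fin_two, Matrix.trace_fin_two, Matrix.sub_apply, Matrix.smul_apply,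
    Matrix.one_apply_eq, Matrix.one_apply_ne zero_ne_one, Matrix.one_apply_ne one_ne_zero,
    smul_eq_mul]
  ring

theorem Matrix.det_mul_map_conj_s9 {n : Type*} [Fintype n] [DecidableEq n] (X : Matrix n n ℂ) :
    (X * X.map (starRingEnd ℂ)).det = (Complex.normSq X.det : ℂ) := by
  rw [Matrix.det_mul, ← Complex.mul_conj]
  exact congrArg (X.det * ·) ((starRingEnd ℂ).map_det X).symm

/-- The conjugate of `tr (X X̄)` is `tr (X̄ X)`. -/
theorem Matrix.ofReal_re_trace_mul_map_conj {n : Type*} [Fintype n] (X : Matrix n n ℂ) :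
    (((X * X.map (starRingEnd ℂ)).trace.re : ℝ) : ℂ) = (X * X.map (starRingEnd ℂ)).trace := by
  rw [← Complex.conj_eq_iff_re, AddMonoidHom.map_trace, Matrix.map_mul, Matrix.map_map]
  simp only [Function.comp_def, Complex.conj_conj, Matrix.map_id']
  exact Matrix.trace_mul_comm _ _

theorem one_sub_mul_add_sq_mul_pos {s τ D : ℝ} (hs : s ∈ Set.Icc (0:ℝ) 1) (hD : D < 1)
    (h1 : 0 < 1 - τ + D) : 0 < 1 - s * τ + s ^ 2 * D := by
  obtain ⟨hs0, hs1⟩ := hs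
  have hsD : s * D < 1 := by
    rcases le_or_gt D 0 with hD0 | hD0
    · linarith [mul_nonpos_of_nonneg_of_nonpos hs0 hD0]
    · linarith [mul_le_of_le_one_left hD0.le hs1]
  have key : 1 - s * τ + s ^ 2 * D = (1 - s) * (1 - s * D) + s * (1 - τ + D) := by ring
  rcases hs1.lt_or_eq with hs1 | rfl
  · rw [key]; nlinarith [mul_pos (sub_pos.2 hs1) (sub_pos.2 hsD)]
  · simpa using h1

theorem Matrix.det_one_sub_ofReal_smul_mul_map_conj_fin_two (X : Matrix (Fin 2) (Fin 2) ℂ)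
    (s : ℝ) :
    (1 - (s : ℂ) • (X * X.map (starRingEnd ℂ))).det =
      ((1 - s * (X * X.map (starRingEnd ℂ)).trace.re + s ^ 2 * Complex.normSq X.det : ℝ) : ℂ) := by
  rw [Matrix.det_one_sub_smul_fin_two, Matrix.det_mul_map_conj_s9]
  push_cast
  rw [Matrix.ofReal_re_trace_mul_map_conj]

theorem det_one_sub_smul_mul_map_conj_pos {X : Matrix (Fin 2) (Fin 2) ℂ} (hX : X ∈ U2) {s : ℝ}
    (hs : s ∈ Set.Icc (0:ℝ) 1) : 0 < (1 - (s : ℂ) • (X * X.map (starRingEnd ℂ))).det := by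
  obtain ⟨hdet, hnorm⟩ := hX
  rw [← one_smul ℂ (X * _), ← Complex.ofReal_one,
    Matrix.det_one_sub_ofReal_smul_mul_map_conj_fin_two, Complex.zero_lt_real, one_mul,
    one_pow, one_mul] at hdet
  have hnormSq : Complex.normSq X.det < 1 := by
    rw [Complex.normSq_eq_norm_sq]
    nlinarith [norm_nonneg X.det]
  rw [Matrix.det_one_sub_ofReal_smul_mul_map_conj_fin_two, Complex.zero_lt_real]
  exact one_sub_mul_add_sq_mul_pos hs hnormSq hdet

/-- `U` is star-shaped about the origin. -/
theorem stmt9 (X : Matrix (Fin 2) (Fin 2) ℂ) (hX : X ∈ U2) (t : ℝ)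
    (ht : t ∈ Set.Icc (0:ℝ) 1) :
    (t : ℂ) • X ∈ U2 ∧
      0 < (1 - ((t:ℂ)^2) • (X * X.map (starRingEnd ℂ))).det := by
  obtain ⟨ht0, ht1⟩ := ht
  have hpos := det_one_sub_smul_mul_map_conj_pos hX (s := t ^ 2) ⟨by positivity, by nlinarith⟩
  push_cast at hpos
  have hconj : ((t : ℂ) • X).map (starRingEnd ℂ) = (t : ℂ) • X.map (starRingEnd ℂ) := by
    ext
    simp
  refine ⟨⟨?_, ?_⟩, hpos⟩
  · rwa [hconj, smul_mul_smul_comm, ← sq]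
  · rw [Matrix.det_smul, norm_mul, norm_pow, Complex.norm_real, Real.norm_of_nonneg ht0]
    calc t ^ Fintype.card (Fin 2) * ‖X.det‖ ≤ 1 * ‖X.det‖ := by
          gcongr
          exact pow_le_one₀ ht0 ht1
      _ < 1 := by simpa using hX.2

end
end

section
/- There is no J ∈ C⁺(g) for which the forms e¹ + i·e³ and e⁴ + i·e² in ℂ⊗g* are both of type (1,0) for J. -/
open scoped ComplexOrder

noncomputable section

/-!
The two forms are of type `(1,0)` exactly when `J` acts on the coordinates `e¹, e³` and `e⁴, e²`
as a rotation, so `J E₁ ≡ E₃` and `J E₂ ≡ -E₄` modulo the centre `span(E₅, E₆)`. Since brackets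
only see coordinates outside the centre, integrability at `(E₁, E₂)` reads `0 = 0 + 2 J E₆`,
which is impossible for an invertible `J`.
-/

lemma br_E0_E1 : br (E 0) (E 1) = 0 := by
  ext i; fin_cases i <;> simp [br, E]

lemma ev_eC_add_I_smul_eC (i j : Fin 6) (v : GV) :
    ev (eC i + Complex.I • eC j) v = v i + Complex.I * v j := by
  simp only [ev, eC, Pi.add_apply, Pi.smul_apply, smul_eq_mul, add_mul, Finset.sum_add_distrib,
    Pi.single_apply, ite_mul, one_mul, zero_mul, mul_ite, mul_one, mul_zero,
    Finset.sum_ite_eq', Finset.mem_univ, if_true]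

section

variable {J : Module.End ℝ GV}

lemma eC_add_I_smul_eC_mem_holSub_iff {i j : Fin 6} :
    eC i + Complex.I • eC j ∈ holSub J ↔ ∀ v, J v i = -v j ∧ J v j = v i := by
  refine forall_congr' fun v => ?_
  rw [ev_eC_add_I_smul_eC, ev_eC_add_I_smul_eC, Complex.ext_iff]
  simp

lemma IsCpxStr.apply_ne_zero (hJ : IsCpxStr J) {x : GV} (hx : x ≠ 0) :
    J x ≠ 0 := fun h => hx (by simpa [h] using (hJ x).symm)

lemma br_apply_E0_E1 (h02 : ∀ v, J v 0 = -v 2 ∧ J v 2 = v 0)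
    (h31 : ∀ v, J v 3 = -v 1 ∧ J v 1 = v 3) :
    br (J (E 0)) (E 1) = E 5 := by
  ext i; fin_cases i <;> simp [br, E, h02, h31]

lemma br_E0_apply_E1 (h02 : ∀ v, J v 0 = -v 2 ∧ J v 2 = v 0)
    (h31 : ∀ v, J v 3 = -v 1 ∧ J v 1 = v 3) :
    br (E 0) (J (E 1)) = E 5 := by
  ext i; fin_cases i <;> simp [br, E, h02, h31]

lemma br_apply_E0_apply_E1 (h02 : ∀ v, J v 0 = -v 2 ∧ J v 2 = v 0)
    (h31 : ∀ v, J v 3 = -v 1 ∧ J v 1 = v 3) :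
    br (J (E 0)) (J (E 1)) = 0 := by
  ext i; fin_cases i <;> simp [br, E, h02, h31]

lemma Integrable.apply_E5_eq_zero (hJ : Integrable J)
    (h02 : ∀ v, J v 0 = -v 2 ∧ J v 2 = v 0)
    (h31 : ∀ v, J v 3 = -v 1 ∧ J v 1 = v 3) :
    J (E 5) = 0 := by
  have h := hJ (E 0) (E 1)
  rw [br_apply_E0_apply_E1 h02 h31, br_E0_E1, br_apply_E0_E1 h02 h31, br_E0_apply_E1 h02 h31,
    zero_add, ← two_smul ℝ] at h
  exact (smul_eq_zero.mp h.symm).resolve_left two_ne_zero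

end

/-- no `J ∈ C⁺(g)` has both `e¹ + i·e³` and `e⁴ + i·e²` as `(1,0)`-forms. -/
theorem stmt12 : ¬ ∃ J ∈ Cplus,
    (eC 0 + Complex.I • eC 2) ∈ holSub J ∧ (eC 3 + Complex.I • eC 1) ∈ holSub J := by
  rintro ⟨J, ⟨hcpx, hint, -⟩, h02, h31⟩
  rw [eC_add_I_smul_eC_mem_holSub_iff] at h02 h31
  exact hcpx.apply_ne_zero (Pi.single_ne_zero_iff.mpr one_ne_zero) (hint.apply_E5_eq_zero h02 h31)

end
end

section
/- Let J ∈ C⁺(g) admit a basis (β¹,β²,β³) of its space of (1,0)-forms with β¹∧β²∧β³∧ω̄¹∧ω²∧ω³ ≠ 0. Then there exist a,b,c,d,x,y,v ∈ ℂ with d = −a·v such that the forms γ¹ = ω¹ + a·ω̄¹ + b·ω², γ² = ω̄² + c·ω̄¹ + d·ω², γ³ = ω̄³ + x·ω̄¹ + y·ω² + v·ω³ constitute a basis of the space of (1,0)-forms of J. -/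
/-! The wedge condition says that the `(1,0)`-forms `H` of `J` and `span(ω̄¹, ω², ω³)` are
complementary, so projecting `ω¹, ω̄², ω̄³` to `H` along that span gives a basis of `H` of the form
`γʲ = uʲ + aⱼ ω̄¹ + bⱼ ω² + tⱼ ω³` with
`(u¹, u², u³) = (ω¹, ω̄², ω̄³)`. The annihilator of `H` in `ℂ ⊗ g` is `{X + iJX}`, which
integrability makes closed under the complexified bracket. It contains three explicit vectors
built from the dual basis of `(ω¹, ω̄², ω̄³, ω̄¹, ω², ω³)`; evaluating `γ¹` and `γ³` on their
brackets gives `t₁² = 0`, `t₂ = 0` and `b₂ + a₁ t₃ = 0`. -/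

open scoped ComplexOrder

noncomputable section

open Submodule Complex

def complexify (X : GV) : MC := fun i => (X i : ℂ)

def brC (Z W : MC) : MC :=
  ![0, 0, 0, 0,
    -(Z 0 * W 2 - Z 2 * W 0) + (Z 1 * W 3 - Z 3 * W 1),
    -(Z 0 * W 3 - Z 3 * W 0) - (Z 1 * W 2 - Z 2 * W 1)]

def holAnn (J : Module.End ℝ GV) : Set MC := {Z | ∀ α ∈ holSub J, α ⬝ᵥ Z = 0}

lemma ev_eq_dotProduct (α : MC) (v : GV) : ev α v = α ⬝ᵥ complexify v := rfl

lemma ev_add (α : MC) (v w : GV) : ev α (v + w) = ev α v + ev α w := by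
  simp [ev, mul_add, Finset.sum_add_distrib]

lemma ev_sub (α : MC) (v w : GV) : ev α (v - w) = ev α v - ev α w := by
  simp [ev, mul_sub, Finset.sum_sub_distrib]

def holForm (J : Module.End ℝ GV) (k : Fin 6) : MC :=
  eC k - I • fun i => ((LinearMap.toMatrix' J : Matrix (Fin 6) (Fin 6) ℝ) k i : ℂ)

lemma ev_holForm (J : Module.End ℝ GV) (k : Fin 6) (v : GV) :
    ev (holForm J k) v = v k - I * J v k := by
  have hJv : J v k = ∑ i, LinearMap.toMatrix' J k i * v i := by
    rw [← LinearMap.toMatrix'_mulVec]; rfl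
  simp [ev, holForm, eC, sub_mul, Finset.sum_sub_distrib, hJv, Finset.mul_sum, mul_assoc,
    Pi.single_apply]

lemma holForm_mem_holSub {J : Module.End ℝ GV} (hJ : IsCpxStr J) (k : Fin 6) :
    holForm J k ∈ holSub J := by
  intro v
  rw [ev_holForm, ev_holForm, hJ v]
  push_cast [Pi.neg_apply]
  linear_combination (J v k : ℂ) * I_mul_I

lemma eq_zero_of_forall_ev_eq_zero {J : Module.End ℝ GV} (hJ : IsCpxStr J) {u : GV}
    (hu : ∀ α ∈ holSub J, ev α u = 0) : u = 0 := by
  funext k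
  simpa [ev_holForm] using congrArg re (hu _ (holForm_mem_holSub hJ k))

lemma exists_eq_of_mem_holAnn {J : Module.End ℝ GV} (hJ : IsCpxStr J) {Z : MC}
    (hZ : Z ∈ holAnn J) : ∃ X : GV, Z = complexify X + I • complexify (J X) := by
  set X : GV := fun i => (Z i).re
  set Y : GV := fun i => (Z i).im
  have hZ_eq : Z = complexify X + I • complexify Y := by
    ext i
    simp only [X, Y, complexify, Pi.add_apply, Pi.smul_apply, smul_eq_mul, mul_comm I]
    exact (re_add_im _).symm
  have hY : Y = J X := by
    rw [← sub_eq_zero]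
    refine eq_zero_of_forall_ev_eq_zero hJ fun α hα => ?_
    have h := hZ α hα
    rw [hZ_eq, dotProduct_add, dotProduct_smul, ← ev_eq_dotProduct, ← ev_eq_dotProduct,
      smul_eq_mul] at h
    rw [ev_sub, hα X]
    linear_combination -I * h + ev α Y * I_sq
  exact ⟨X, hY ▸ hZ_eq⟩

lemma brC_complexify (X X' Y Y' : GV) :
    brC (complexify X + I • complexify X') (complexify Y + I • complexify Y') =
      complexify (br X Y) - complexify (br X' Y') +
        I • (complexify (br X' Y) + complexify (br X Y')) := by
  ext i
  fin_cases i <;> simp [brC, br, complexify] <;> ring_nf <;> simp [I_sq] <;> ring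

theorem dotProduct_brC_eq_zero {J : Module.End ℝ GV} (hJ : IsCpxStr J) (hInt : Integrable J)
    {α : MC} (hα : α ∈ holSub J) {Z W : MC} (hZ : Z ∈ holAnn J) (hW : W ∈ holAnn J) :
    α ⬝ᵥ brC Z W = 0 := by
  obtain ⟨X, rfl⟩ := exists_eq_of_mem_holAnn hJ hZ
  obtain ⟨Y, rfl⟩ := exists_eq_of_mem_holAnn hJ hW
  have h := congrArg (ev α) (hInt X Y)
  rw [ev_add, ev_add, hα, hα] at h
  rw [brC_complexify]
  simp only [dotProduct_add, dotProduct_sub, dotProduct_smul, smul_eq_mul, ← ev_eq_dotProduct]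
  linear_combination -h

theorem linearIndependent_of_wedge_ne_zero {K M : Type*} [Field K] [AddCommGroup M] [Module K M]
    {v₀ v₁ v₂ v₃ v₄ v₅ : M}
    (h : ExteriorAlgebra.ι K v₀ * ExteriorAlgebra.ι K v₁ * ExteriorAlgebra.ι K v₂ *
      ExteriorAlgebra.ι K v₃ * ExteriorAlgebra.ι K v₄ * ExteriorAlgebra.ι K v₅ ≠ 0) :
    LinearIndependent K ![v₀, v₁, v₂, v₃, v₄, v₅] := by
  by_contra hdep
  apply h
  simpa [ExteriorAlgebra.ιMulti_apply, List.ofFn_succ, mul_assoc] using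
    AlternatingMap.map_linearDependent (ExteriorAlgebra.ιMulti K 6) _ hdep

theorem isCompl_span_of_linearIndependent {K M : Type*} [Field K] [AddCommGroup M] [Module K M]
    [FiniteDimensional K M] (hM : Module.finrank K M = 6) {b₁ b₂ b₃ s₁ s₂ s₃ : M}
    (h : LinearIndependent K ![b₁, b₂, b₃, s₁, s₂, s₃]) :
    IsCompl (span K {b₁, b₂, b₃}) (span K {s₁, s₂, s₃}) := by
  have hb : ![b₁, b₂, b₃, s₁, s₂, s₃] '' {0, 1, 2} = {b₁, b₂, b₃} := by
    simp [Set.image_insert_eq]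
  have hs : ![b₁, b₂, b₃, s₁, s₂, s₃] '' {3, 4, 5} = {s₁, s₂, s₃} := by
    simp [Set.image_insert_eq]
  constructor
  · rw [← hb, ← hs]
    exact h.disjoint_span_image (by simp [Set.disjoint_left])
  · rw [codisjoint_iff, ← span_union, ← h.span_eq_top_of_card_eq_finrank (by simp [hM])]
    congr 1
    ext
    simp [Matrix.range_cons]
    tauto

def echelon (a b t : Fin 3 → ℂ) (j : Fin 3) : MC :=
  ![w1, w2b, w3b] j + a j • w1b + b j • w2 + t j • w3

theorem exists_echelon_mem {H : Submodule ℂ MC} (hH : IsCompl H (span ℂ {w1b, w2, w3})) :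
    ∃ a b t : Fin 3 → ℂ, ∀ j, echelon a b t j ∈ H := by
  have key (u : MC) : ∃ a b t : ℂ, u + a • w1b + b • w2 + t • w3 ∈ H := by
    obtain ⟨h, hh, s, hs, rfl⟩ := mem_sup.mp (hH.sup_eq_top ▸ mem_top : u ∈ H ⊔ _)
    obtain ⟨a, b, t, rfl⟩ := mem_span_triple.mp hs
    exact ⟨-a, -b, -t, by convert hh using 1; module⟩
  choose a b t h using fun j => key (![w1, w2b, w3b] j)
  exact ⟨a, b, t, h⟩

theorem linearIndependent_of_dotProduct_eq_ite {K ι n : Type*} [CommRing K] [Fintype ι]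
    [DecidableEq ι] [Fintype n] {v d : ι → n → K}
    (h : ∀ i j, v i ⬝ᵥ d j = if i = j then 1 else 0) : LinearIndependent K v := by
  refine Fintype.linearIndependent_iff.mpr fun g hg j => ?_
  simpa [sum_dotProduct, smul_dotProduct, h] using congrArg (· ⬝ᵥ d j) hg

theorem span_range_eq_of_linearIndependent {K V ι : Type*} [Field K] [AddCommGroup V]
    [Module K V] [Fintype ι] {b v : ι → V} {H : Submodule K V} (hb : span K (Set.range b) = H)
    (hv : LinearIndependent K v) (hvH : ∀ i, v i ∈ H) : span K (Set.range v) = H := by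
  subst hb
  have := FiniteDimensional.span_of_finite K (Set.finite_range b)
  refine eq_of_le_of_finrank_le (span_le.mpr (Set.range_subset_iff.mpr hvH)) ?_
  rw [finrank_span_eq_card hv]
  exact finrank_range_le_card b

lemma isHolBasis_iff {J : Module.End ℝ GV} {α₁ α₂ α₃ : MC} :
    IsHolBasis J α₁ α₂ α₃ ↔
      LinearIndependent ℂ ![α₁, α₂, α₃] ∧ span ℂ (Set.range ![α₁, α₂, α₃]) = holSub J := by
  rw [IsHolBasis, Matrix.range_cons, Matrix.range_cons_cons_empty, Set.singleton_union]

-- In `E`-coordinates, `(d1, d2b, d3b, d1b, d2, d3)` is the basis of `ℂ ⊗ g` dual to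
-- `(ω¹, ω̄², ω̄³, ω̄¹, ω², ω³)` under `⬝ᵥ`.
def d1 : MC := ![1/2, -I/2, 0, 0, 0, 0]
def d1b : MC := ![1/2, I/2, 0, 0, 0, 0]
def d2 : MC := ![0, 0, 1/2, -I/2, 0, 0]
def d2b : MC := ![0, 0, 1/2, I/2, 0, 0]
def d3 : MC := ![0, 0, 0, 0, 1/2, -I/2]
def d3b : MC := ![0, 0, 0, 0, 1/2, I/2]

lemma echelon_dotProduct_dual (a b t : Fin 3 → ℂ) (i j : Fin 3) :
    echelon a b t i ⬝ᵥ ![d1, d2b, d3b] j = if i = j then 1 else 0 := by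
  fin_cases i <;> fin_cases j <;>
    simp [echelon, w1, w2, w3, w1b, w2b, w3b, eC, d1, d2b, d3b, dotProduct, Fin.sum_univ_six] <;>
    ring_nf <;> simp [I_sq] <;> ring_nf

lemma linearIndependent_echelon (a b t : Fin 3 → ℂ) : LinearIndependent ℂ (echelon a b t) :=
  linearIndependent_of_dotProduct_eq_ite (echelon_dotProduct_dual a b t)

lemma echelon_dotProduct_dual_bar (a b t : Fin 3 → ℂ) (j : Fin 3) :
    echelon a b t j ⬝ᵥ d1b = a j ∧ echelon a b t j ⬝ᵥ d2 = b j ∧ echelon a b t j ⬝ᵥ d3 = t j := by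
  fin_cases j <;> refine ⟨?_, ?_, ?_⟩ <;>
    simp [echelon, w1, w2, w3, w1b, w2b, w3b, eC, d1b, d2, d3, dotProduct, Fin.sum_univ_six] <;>
    ring_nf <;> simp [I_sq] <;> ring_nf

def annVec (d : MC) (c : Fin 3 → ℂ) : MC := d - ∑ k, c k • ![d1, d2b, d3b] k

lemma echelon_dotProduct_annVec (a b t c : Fin 3 → ℂ) (d : MC) (j : Fin 3) :
    echelon a b t j ⬝ᵥ annVec d c = echelon a b t j ⬝ᵥ d - c j := by
  simp [annVec, dotProduct_sum, echelon_dotProduct_dual]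

lemma mem_holAnn_of_span {J : Module.End ℝ GV} {γ : Fin 3 → MC}
    (hγ : span ℂ (Set.range γ) = holSub J) {Z : MC} (hZ : ∀ j, γ j ⬝ᵥ Z = 0) :
    Z ∈ holAnn J := by
  intro α hα
  rw [← hγ] at hα
  induction hα using span_induction with
  | mem x hx => obtain ⟨j, rfl⟩ := hx; exact hZ j
  | zero => exact zero_dotProduct Z
  | add x y _ _ hx hy => rw [add_dotProduct, hx, hy, add_zero]
  | smul c x _ hx => rw [smul_dotProduct, hx, smul_zero]

lemma annVec_mem_holAnn {J : Module.End ℝ GV} {a b t : Fin 3 → ℂ}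
    (hγ : span ℂ (Set.range (echelon a b t)) = holSub J) :
    annVec d1b a ∈ holAnn J ∧ annVec d2 b ∈ holAnn J ∧ annVec d3 t ∈ holAnn J := by
  refine ⟨?_, ?_, ?_⟩ <;> refine mem_holAnn_of_span hγ fun j => ?_ <;>
    simp [echelon_dotProduct_annVec, echelon_dotProduct_dual_bar]

lemma brC_annVec (a b t : Fin 3 → ℂ) :
    brC (annVec d2 b) (annVec d3 t) = -t 0 • d3 ∧
    brC (annVec d1b a) (annVec d3 t) = t 1 • d3b ∧
    brC (annVec d1b a) (annVec d2 b) = b 1 • d3b + a 0 • d3 := by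
  refine ⟨?_, ?_, ?_⟩ <;> ext i <;> fin_cases i <;>
    simp [brC, annVec, Fin.sum_univ_three, d1, d1b, d2, d2b, d3, d3b] <;>
    ring_nf <;> simp [I_sq] <;> ring_nf

theorem echelon_constraints_of_integrable {J : Module.End ℝ GV} (hJ : IsCpxStr J) (hInt : Integrable J)
    {a b t : Fin 3 → ℂ} (hγ : span ℂ (Set.range (echelon a b t)) = holSub J) :
    t 0 = 0 ∧ t 1 = 0 ∧ b 1 = -(a 0 * t 2) := by
  obtain ⟨hZ, hW, hU⟩ := annVec_mem_holAnn hγ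
  have hmem (j : Fin 3) : echelon a b t j ∈ holSub J := hγ ▸ subset_span ⟨j, rfl⟩
  have hWU := dotProduct_brC_eq_zero hJ hInt (hmem 0) hW hU
  have hZU := dotProduct_brC_eq_zero hJ hInt (hmem 2) hZ hU
  have hZW := dotProduct_brC_eq_zero hJ hInt (hmem 2) hZ hW
  obtain ⟨hWU', hZU', hZW'⟩ := brC_annVec a b t
  have h3b : echelon a b t 2 ⬝ᵥ d3b = 1 := by simpa using echelon_dotProduct_dual a b t 2 2
  simp only [hWU', hZU', hZW', dotProduct_add, dotProduct_smul, smul_eq_mul, h3b,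
    (echelon_dotProduct_dual_bar a b t _).2.2] at hWU hZU hZW
  exact ⟨by simpa using hWU, by simpa using hZU, by linear_combination hZW⟩

/-- echelon form for `(1,0)`-bases of structures at finite distance from `J₁`. -/
theorem stmt13 (J : Module.End ℝ GV) (hJ : J ∈ Cplus) (b1 b2 b3 : MC)
    (hb : IsHolBasis J b1 b2 b3)
    (hw : ι b1 * ι b2 * ι b3 * ι w1b * ι w2 * ι w3 ≠ 0) :
    ∃ a b c d x y v : ℂ, d = -(a * v) ∧
      IsHolBasis J (w1 + a • w1b + b • w2) (w2b + c • w1b + d • w2)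
        (w3b + x • w1b + y • w2 + v • w3) := by
  obtain ⟨hcpx, hint, -⟩ := hJ
  have hcompl : IsCompl (holSub J) (span ℂ {w1b, w2, w3}) :=
    hb.2 ▸ isCompl_span_of_linearIndependent (by simp) (linearIndependent_of_wedge_ne_zero hw)
  obtain ⟨a, b, t, hmem⟩ := exists_echelon_mem hcompl
  have hspan := span_range_eq_of_linearIndependent (isHolBasis_iff.mp hb).2
    (linearIndependent_echelon a b t) hmem
  obtain ⟨ht0, ht1, hb1⟩ := echelon_constraints_of_integrable hcpx hint hspan
  refine ⟨a 0, b 0, a 1, b 1, a 2, b 2, t 2, hb1, isHolBasis_iff.mpr ?_⟩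
  have hγ : ![w1 + a 0 • w1b + b 0 • w2, w2b + a 1 • w1b + b 1 • w2,
      w3b + a 2 • w1b + b 2 • w2 + t 2 • w3] = echelon a b t := by
    ext j : 1
    fin_cases j <;> simp [echelon, ht0, ht1]
  exact hγ ▸ ⟨linearIndependent_echelon a b t, hspan⟩

end
end

section
/- Let A ∈ Mₙ(ℝ) satisfy A² = −Iₙ, and let A = S·P be its polar decomposition, with S symmetric positive definite and P orthogonal. Then P² = −Iₙ, S = P⁻¹·S⁻¹·P, and if σ is any symmetric real matrix with exp(σ) = S, then (exp(tσ)·P)² = −Iₙ for every t ∈ ℝ. -/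
open scoped ComplexOrder

noncomputable section

/-!
Since `A⁻¹ = -A`, the matrix `-A` has the two polar decompositions `S · (-P)` and
`(Pᵀ S⁻¹ P) · Pᵀ`; uniqueness of the polar decomposition (through uniqueness of positive square
roots) gives `Pᵀ S⁻¹ P = S` and `Pᵀ = -P`. If `exp σ = S`, then `Pᵀ (-σ) P` is a symmetric
logarithm of `Pᵀ S⁻¹ P = S`, so it equals `σ` by injectivity of `exp` on symmetric matrices.
Hence `P` anticommutes with `σ`, so `P exp(tσ) = exp(-tσ) P` and `(exp(tσ) P)² = P² = -1`.
-/

open NormedSpace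

namespace Matrix

variable {n 𝕜 : Type*} [Fintype n] [DecidableEq n] [RCLike 𝕜]

lemma IsHermitian.mul_unitary_mul_conjTranspose_eq_sq {S U : Matrix n n 𝕜} (hS : S.IsHermitian)
    (hU : U ∈ unitaryGroup n 𝕜) : S * U * (S * U)ᴴ = S ^ 2 := by
  rw [conjTranspose_mul, hS.eq, mul_assoc, ← mul_assoc U, ← star_eq_conjTranspose,
    mem_unitaryGroup_iff.1 hU, one_mul, sq]

open scoped MatrixOrder in
theorem PosSemidef.eq_of_mul_unitary_eq {S₁ S₂ U₁ U₂ : Matrix n n 𝕜}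
    (hS₁ : S₁.PosSemidef) (hS₂ : S₂.PosSemidef)
    (hU₁ : U₁ ∈ unitaryGroup n 𝕜) (hU₂ : U₂ ∈ unitaryGroup n 𝕜)
    (h : S₁ * U₁ = S₂ * U₂) : S₁ = S₂ := by
  rw [← CFC.sq_eq_sq_iff S₁ S₂ hS₁.nonneg hS₂.nonneg,
    ← hS₁.1.mul_unitary_mul_conjTranspose_eq_sq hU₁, h,
    hS₂.1.mul_unitary_mul_conjTranspose_eq_sq hU₂]

theorem polar_factors_of_mul_self_eq_neg_one {S P : Matrix n n 𝕜} (hS : S.PosDef)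
    (hP : P ∈ unitaryGroup n 𝕜) (h : S * P * (S * P) = -1) :
    Pᴴ * S⁻¹ * P = S ∧ Pᴴ = -P := by
  have hPPh : P * Pᴴ = 1 := mem_unitaryGroup_iff.1 hP
  have hinv : (S * P)⁻¹ = -(S * P) := inv_eq_right_inv (by rw [mul_neg, h, neg_neg])
  have hpolar : Pᴴ * S⁻¹ * P * Pᴴ = S * -P := by
    rw [mul_assoc _ P, hPPh, mul_one, mul_neg, ← hinv, mul_inv_rev, inv_eq_right_inv hPPh]
  have hnegP : -P ∈ unitaryGroup n 𝕜 :=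
    mem_unitaryGroup_iff.2 (by rw [star_neg, neg_mul_neg, star_eq_conjTranspose, hPPh])
  have hS' : Pᴴ * S⁻¹ * P = S :=
    (hS.inv.posSemidef.conjTranspose_mul_mul_same P).eq_of_mul_unitary_eq hS.posSemidef
      (Unitary.star_mem hP) hnegP hpolar
  rw [hS'] at hpolar
  exact ⟨hS', hS.isUnit.mul_right_inj.1 hpolar⟩

open scoped Matrix.Norms.L2Operator in
theorem exp_injOn_isHermitian :
    Set.InjOn (exp : Matrix n n 𝕜 → Matrix n n 𝕜) {a | a.IsHermitian} := by
  -- `CFC.log` needs a normed `ℝ`-algebra: restrict the scalars of the L² operator norm.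
  let _ : NormedAlgebra ℝ (Matrix n n 𝕜) :=
    { norm_smul_le r A := by
        rw [← algebraMap_smul 𝕜 r A]
        exact (norm_smul_le _ _).trans_eq (by rw [RCLike.norm_ofReal]; rfl) }
  intro a ha b hb h
  rw [← CFC.log_exp a (isHermitian_iff_isSelfAdjoint.1 ha), h,
    CFC.log_exp b (isHermitian_iff_isSelfAdjoint.1 hb)]

theorem mul_eq_neg_mul_of_conj_inv_exp_eq_exp {σ P : Matrix n n 𝕜} (hσ : σ.IsHermitian)
    (hP : P ∈ unitaryGroup n 𝕜) (h : Pᴴ * (exp σ)⁻¹ * P = exp σ) : P * σ = -σ * P := by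
  have hPPh : P * Pᴴ = 1 := mem_unitaryGroup_iff.1 hP
  have hPinv : P⁻¹ = Pᴴ := inv_eq_right_inv hPPh
  have hconj : Pᴴ * -σ * P = σ := by
    refine exp_injOn_isHermitian (isHermitian_conjTranspose_mul_mul P hσ.neg) hσ ?_
    rw [← hPinv, exp_conj' P _ (Unitary.isUnit_coe (U := ⟨P, hP⟩)), exp_neg, hPinv, h]
  calc P * σ = P * (Pᴴ * -σ * P) := by rw [hconj]
    _ = -σ * P := by rw [← mul_assoc, ← mul_assoc, hPPh, one_mul]

theorem exp_mul_mul_exp_mul_of_mul_eq_neg_mul {σ P : Matrix n n 𝕜} (hP : IsUnit P)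
    (h : P * σ = -σ * P) : exp σ * P * (exp σ * P) = P * P := by
  have hPdet := (isUnit_iff_isUnit_det P).1 hP
  have hconj : P * exp σ * P⁻¹ = exp (-σ) := by
    rw [← exp_conj P σ hP, h, mul_assoc, mul_nonsing_inv P hPdet, mul_one]
  have hcomm : P * exp σ = (exp σ)⁻¹ * P := by
    rw [← exp_neg, ← hconj, mul_assoc _ P⁻¹, nonsing_inv_mul P hPdet, mul_one]
  calc exp σ * P * (exp σ * P) = exp σ * (P * exp σ) * P := by simp only [mul_assoc]
    _ = exp σ * (exp σ)⁻¹ * (P * P) := by rw [hcomm]; simp only [mul_assoc]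
    _ = P * P := by
      rw [mul_nonsing_inv _ ((isUnit_iff_isUnit_det _).1 (isUnit_exp σ)), one_mul]

end Matrix

open Matrix in
theorem stmt14_general (n : ℕ) (A S P : Matrix (Fin n) (Fin n) ℝ)
    (hA : A * A = -1) (hS : S.PosDef) (hP : P.transpose * P = 1)
    (hSP : A = S * P) :
    P * P = -1 ∧ S = P⁻¹ * S⁻¹ * P ∧
    ∀ σ : Matrix (Fin n) (Fin n) ℝ, σ.IsSymm → NormedSpace.exp σ = S →
      ∀ t : ℝ,
        (NormedSpace.exp (t • σ) * P) * (NormedSpace.exp (t • σ) * P) = -1 := by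
  have hPu : P ∈ unitaryGroup (Fin n) ℝ := by
    rwa [mem_unitaryGroup_iff', star_eq_conjTranspose, conjTranspose_eq_transpose_of_trivial]
  have hPPh : P * Pᴴ = 1 := mem_unitaryGroup_iff.1 hPu
  have hPunit : IsUnit P := Unitary.isUnit_coe (U := ⟨P, hPu⟩)
  obtain ⟨hSconj, hPanti⟩ := polar_factors_of_mul_self_eq_neg_one hS hPu (hSP ▸ hA)
  have hPP : P * P = -1 := by
    rw [← hPPh, hPanti, mul_neg, neg_neg]
  refine ⟨hPP, by rw [inv_eq_right_inv hPPh, hSconj], ?_⟩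
  intro σ hσ hexp t
  have hanti : P * σ = -σ * P :=
    mul_eq_neg_mul_of_conj_inv_exp_eq_exp (isHermitian_iff_isSymm.2 hσ) hPu (by rwa [hexp])
  rw [exp_mul_mul_exp_mul_of_mul_eq_neg_mul hPunit
    (by rw [Matrix.mul_smul, hanti, neg_mul, neg_mul, Matrix.smul_mul, smul_neg]), hPP]

/-- polar decomposition of an anti-involutive real matrix. -/
theorem stmt14 (n : ℕ) (A S P : Matrix (Fin n) (Fin n) ℝ)
    (hA : A * A = -1) (hS : S.PosDef) (hSsymm : S.IsSymm) (hP : P.transpose * P = 1)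
    (hSP : A = S * P) :
    P * P = -1 ∧ S = P⁻¹ * S⁻¹ * P ∧
    ∀ σ : Matrix (Fin n) (Fin n) ℝ, σ.IsSymm → NormedSpace.exp σ = S →
      ∀ t : ℝ,
        (NormedSpace.exp (t • σ) * P) * (NormedSpace.exp (t • σ) * P) = -1 :=
  stmt14_general n A S P hA hS hP hSP

end
end

section
/- Let A : g → g be an ℝ-linear map such that A(E₅) = E₅, A(E₆) = E₆, A preserves V = span(E₁,E₂,E₃,E₄), the restriction of A to V is orthogonal, and the induced action of A on the second exterior power of V* fixes each of the three 2-forms e¹∧e² + e³∧e⁴, e¹∧e³ + e⁴∧e², e¹∧e⁴ + e²∧e³. Then A is a Lie algebra automorphism of g, i.e. A[X,Y] = [AX,AY] for all X,Y ∈ g. -/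
open scoped ComplexOrder

noncomputable section

/-- `(e¹∧e² + e³∧e⁴)(x,y)` -/
def f1 (x y : GV) : ℝ := (x 0 * y 1 - x 1 * y 0) + (x 2 * y 3 - x 3 * y 2)
/-- `(e¹∧e³ + e⁴∧e²)(x,y)` -/
def f2 (x y : GV) : ℝ := (x 0 * y 2 - x 2 * y 0) + (x 3 * y 1 - x 1 * y 3)
/-- `(e¹∧e⁴ + e²∧e³)(x,y)` -/
def f3 (x y : GV) : ℝ := (x 0 * y 3 - x 3 * y 0) + (x 1 * y 2 - x 2 * y 1)


/-! The bracket of `g` takes values in the centre `span(E₅, E₆)` and its components are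
`-(e¹∧e³ + e⁴∧e²)` and `-(e¹∧e⁴ + e²∧e³)`, which see only the `V`-components of their
arguments. Since `A` fixes `E₅` and `E₆`, it changes the `V`-component of a vector only through
`A` restricted to `V`, so these two forms are `A`-invariant on all of `g`; together with
`A E₅ = E₅`, `A E₆ = E₆` this is exactly `A [X, Y] = [A X, A Y]`. -/

def projV (x : GV) : GV := x 0 • E 0 + x 1 • E 1 + x 2 • E 2 + x 3 • E 3

lemma projV_mem_V4span (x : GV) : projV x ∈ V4span := by
  have hE : ∀ i ∈ ({0, 1, 2, 3} : Finset (Fin 6)), E i ∈ V4span := fun i hi =>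
    Submodule.subset_span (by fin_cases hi <;> simp)
  unfold projV
  refine add_mem (add_mem (add_mem ?_ ?_) ?_) ?_ <;>
    exact Submodule.smul_mem _ _ (hE _ (by decide))

lemma projV_add_center (x : GV) : projV x + x 4 • E 4 + x 5 • E 5 = x := by
  funext i
  fin_cases i <;> simp [projV, E]

lemma br_eq (X Y : GV) : br X Y = (-f2 X Y) • E 4 + (-f3 X Y) • E 5 := by
  funext i
  fin_cases i <;> simp [br, f2, f3, E] <;> ring

lemma f2_add_center (x y : GV) (a b c d : ℝ) :
    f2 (x + a • E 4 + b • E 5) (y + c • E 4 + d • E 5) = f2 x y := by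
  simp [f2, E]

lemma f3_add_center (x y : GV) (a b c d : ℝ) :
    f3 (x + a • E 4 + b • E 5) (y + c • E 4 + d • E 5) = f3 x y := by
  simp [f3, E]

lemma map_invariant_of_invariant_on_V4span {A : Module.End ℝ GV}
    (h5 : A (E 4) = E 4) (h6 : A (E 5) = E 5) {f : GV → GV → ℝ}
    (hcenter : ∀ x y (a b c d : ℝ), f (x + a • E 4 + b • E 5) (y + c • E 4 + d • E 5) = f x y)
    (hV : ∀ x ∈ V4span, ∀ y ∈ V4span, f (A x) (A y) = f x y) (x y : GV) :
    f (A x) (A y) = f x y := by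
  rw [← projV_add_center x, ← projV_add_center y]
  simp only [map_add, map_smul, h5, h6, hcenter]
  exact hV _ (projV_mem_V4span x) _ (projV_mem_V4span y)

theorem stmt19_general (A : Module.End ℝ GV)
    (h5 : A (E 4) = E 4) (h6 : A (E 5) = E 5)
    (hf2 : ∀ x ∈ V4span, ∀ y ∈ V4span, f2 (A x) (A y) = f2 x y)
    (hf3 : ∀ x ∈ V4span, ∀ y ∈ V4span, f3 (A x) (A y) = f3 x y) :
    ∀ X Y : GV, A (br X Y) = br (A X) (A Y) := by
  intro X Y
  rw [br_eq, br_eq (A X),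
    map_invariant_of_invariant_on_V4span h5 h6 f2_add_center hf2,
    map_invariant_of_invariant_on_V4span h5 h6 f3_add_center hf3]
  simp only [map_add, map_smul, h5, h6]

/-- a map fixing `E₅`, `E₆`, preserving `V = span(E₁,…,E₄)` orthogonally
and fixing the three self-dual 2-forms on `V` is a Lie algebra automorphism of `g`. -/
theorem stmt19 (A : Module.End ℝ GV)
    (h5 : A (E 4) = E 4) (h6 : A (E 5) = E 5)
    (hpres : ∀ x ∈ V4span, A x ∈ V4span)
    (horth : ∀ x ∈ V4span, ∀ y ∈ V4span, inner6 (A x) (A y) = inner6 x y)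
    (hf1 : ∀ x ∈ V4span, ∀ y ∈ V4span, f1 (A x) (A y) = f1 x y)
    (hf2 : ∀ x ∈ V4span, ∀ y ∈ V4span, f2 (A x) (A y) = f2 x y)
    (hf3 : ∀ x ∈ V4span, ∀ y ∈ V4span, f3 (A x) (A y) = f3 x y) :
    ∀ X Y : GV, A (br X Y) = br (A X) (A Y) :=
  stmt19_general A h5 h6 hf2 hf3

end
end
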